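/- arXiv:2106.10424 — 4 statements merged into one kernel-verified Lean document; each statement's English description precedes it below -/
import Mathlib

section
/- Let M satisfy the Reset Cliff assumption. Let the dataset D consist of m ≥ 1 i.i.d. trajectories drawn from the trajectory distribution of the expert policy π^E, let P̂_h be the empirical maximum-likelihood estimate of P^{π^E}_h computed from D, and let π^{AIL}(D) be any (measurable) choice of global minimizer over all policies of L(π) = Σ_{h=1}^H Σ_{(s,a)} |P^π_h(s,a) − P̂_h(s,a)|. Then V^{π^E} − E_D[V^{π^{AIL}(D)}] ≤ 2·√((|S| − 1)/m). In particular, on Reset Cliff instances VAIL has a horizon-free sample complexity: O(|S|/ε²) expert trajectories suffice for an ε-optimal policy in expectation. -/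
open Finset

/-- State distribution `d^π_h` of a policy `π` in an episodic tabular MDP
(time steps are 0-indexed: `stateDist ρ P π 0 = ρ`). -/
noncomputable def stateDist {S A : Type*} [Fintype S] [Fintype A] (ρ : S → ℝ)
    (P : ℕ → S → A → S → ℝ) (π : ℕ → S → A → ℝ) : ℕ → S → ℝ
  | 0 => ρ
  | h + 1 => fun s' => ∑ s : S, ∑ a : A, stateDist ρ P π h s * π h s a * P h s a s'

/-- State-action distribution `P^π_h(s,a) = d^π_h(s) π_h(a|s)`. -/
noncomputable def saDist {S A : Type*} [Fintype S] [Fintype A] (ρ : S → ℝ)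
    (P : ℕ → S → A → S → ℝ) (π : ℕ → S → A → ℝ) (h : ℕ) (s : S) (a : A) : ℝ :=
  stateDist ρ P π h s * π h s a

/-- Policy value `V^π = Σ_{h<H} Σ_{(s,a)} P^π_h(s,a) r_h(s,a)`. -/
noncomputable def policyValue {S A : Type*} [Fintype S] [Fintype A] (ρ : S → ℝ)
    (P : ℕ → S → A → S → ℝ) (π : ℕ → S → A → ℝ) (r : ℕ → S → A → ℝ) (H : ℕ) : ℝ :=
  ∑ h ∈ Finset.range H, ∑ s : S, ∑ a : A, saDist ρ P π h s a * r h s a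

/-- `π` is a (Markovian, non-stationary) policy. -/
def IsPolicy {S A : Type*} [Fintype A] (π : ℕ → S → A → ℝ) : Prop :=
  ∀ h s, (∀ a, 0 ≤ π h s a) ∧ (∑ a : A, π h s a) = 1

/-- `P` is a transition function. -/
def IsTransition {S A : Type*} [Fintype S] (P : ℕ → S → A → S → ℝ) : Prop :=
  ∀ h s a, (∀ s', 0 ≤ P h s a s') ∧ (∑ s' : S, P h s a s') = 1

/-- `ρ` is an initial state distribution. -/
def IsInitDist {S : Type*} [Fintype S] (ρ : S → ℝ) : Prop :=
  (∀ s, 0 ≤ ρ s) ∧ (∑ s : S, ρ s) = 1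

/-- Rewards take values in `[0,1]`. -/
def IsReward {S A : Type*} (r : ℕ → S → A → ℝ) : Prop :=
  ∀ h s a, 0 ≤ r h s a ∧ r h s a ≤ 1

/-- The VAIL state-action distribution matching objective
`L(π) = Σ_{h<H} Σ_{(s,a)} |P^π_h(s,a) − Q_h(s,a)|`. -/
noncomputable def vailLoss {S A : Type*} [Fintype S] [Fintype A] (ρ : S → ℝ)
    (P : ℕ → S → A → S → ℝ) (π : ℕ → S → A → ℝ) (Q : ℕ → S → A → ℝ) (H : ℕ) : ℝ :=
  ∑ h ∈ Finset.range H, ∑ s : S, ∑ a : A, |saDist ρ P π h s a - Q h s a|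

/-- The Reset Cliff assumption: good states `G` (with bad states `Gᶜ`), expert action `a1`. -/
def ResetCliff {S A : Type*} [Fintype S] [Fintype A] [DecidableEq S]
    (ρ : S → ℝ) (P : ℕ → S → A → S → ℝ) (r : ℕ → S → A → ℝ)
    (G : Finset S) (a1 : A) : Prop :=
  G.Nonempty ∧
  (∀ (h : ℕ), ∀ s ∈ G, r h s a1 = 1) ∧
  (∀ (h : ℕ) (s : S) (a : A), (s ∉ G ∨ a ≠ a1) → r h s a = 0) ∧
  (∀ (h : ℕ), ∀ s ∈ G, (∑ s' ∈ G, P h s a1 s') = 1) ∧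
  (∀ (h : ℕ), ∀ s ∈ G, ∀ s' ∈ G, 0 < P h s a1 s') ∧
  (∀ (h : ℕ), ∀ s ∈ G, ∀ a : A, a ≠ a1 → (∑ s' ∈ Gᶜ, P h s a s') = 1) ∧
  (∀ (h : ℕ), ∀ s ∉ G, ∀ a : A, (∑ s' ∈ Gᶜ, P h s a s') = 1) ∧
  (∀ s ∈ G, 0 < ρ s) ∧
  (∀ s ∉ G, ρ s = 0)

/-- Admissible estimates for the expert state-action distributions on a Reset Cliff instance. -/
def AdmissibleEst {S A : Type*} [Fintype S] [DecidableEq S]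
    (G : Finset S) (a1 : A) (Q : ℕ → S → A → ℝ) (H : ℕ) : Prop :=
  ∀ h < H, (∀ s a, 0 ≤ Q h s a) ∧
    (∀ (s : S) (a : A), (s ∉ G ∨ a ≠ a1) → Q h s a = 0) ∧
    (∑ s ∈ G, Q h s a1) = 1

/-- Probability of the (truncated) trajectory `t` of length `H` under policy `π`. -/
noncomputable def trajProb {S A : Type*} [Fintype S] [Fintype A] (ρ : S → ℝ)
    (P : ℕ → S → A → S → ℝ) (π : ℕ → S → A → ℝ) (H : ℕ) (t : ℕ → S × A) : ℝ :=
  ρ (t 0).1 * π 0 (t 0).1 (t 0).2 *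
    ∏ ℓ ∈ Finset.range (H - 1),
      (P ℓ (t ℓ).1 (t ℓ).2 (t (ℓ + 1)).1 * π (ℓ + 1) (t (ℓ + 1)).1 (t (ℓ + 1)).2)

/-- Extend a length-`H` trajectory to a function on all of `ℕ`. -/
noncomputable def extendTraj {S A : Type*} [Nonempty S] [Nonempty A] {H : ℕ}
    (tr : Fin H → S × A) : ℕ → S × A :=
  fun n => if h : 0 < H then tr ⟨n % H, Nat.mod_lt n h⟩ else Classical.arbitrary (S × A)

/-- The empirical (maximum likelihood) estimate of the state-action distribution
computed from the dataset `D` of `m` trajectories. -/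
noncomputable def empEst {S A : Type*} [Nonempty S] [Nonempty A]
    [DecidableEq S] [DecidableEq A] {H m : ℕ}
    (D : Fin m → Fin H → S × A) (h : ℕ) (s : S) (a : A) : ℝ :=
  (∑ i : Fin m, if extendTraj (D i) h = (s, a) then (1 : ℝ) else 0) / m

/-- Expectation of `f` over a dataset of `m` i.i.d. trajectories drawn from the
trajectory distribution of `π`. -/
noncomputable def datasetExp {S A : Type*} [Fintype S] [Fintype A] [Nonempty S] [Nonempty A]
    (ρ : S → ℝ) (P : ℕ → S → A → S → ℝ) (π : ℕ → S → A → ℝ)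
    (H m : ℕ) (f : (Fin m → Fin H → S × A) → ℝ) : ℝ :=
  ∑ D : Fin m → Fin H → S × A, (∏ i : Fin m, trajProb ρ P π H (extendTraj (D i))) * f D


/-!
Any policy puts at most as much mass `y_h(s) = P^π_h(s, a1)` on a good state as the expert puts
there (`d_h(s)`), and against an estimate `q` supported on `G × {a1}` its VAIL loss exceeds the
expert's by `∑_h ∑_{s ∈ G} (|y - q| + (d - y) - |d - q|)`, a sum of nonnegative terms that vanish
only where `y = d` or `q ≤ y`. As the minimiser's loss is at most the expert's, one of the two
holds everywhere. A deficit `y < d` before the last step spreads, because transitions between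
good states under `a1` are positive, to every good state at the next step; there `q ≤ y < d`
everywhere, contradicting `∑ q = ∑ d = 1`. So the minimiser loses value only at the last step,
at most `∑_{s ∈ G} |d_{H-1}(s) - q_{H-1}(s)|`. A dataset of positive probability consists of
expert trajectories inside `G`, so its empirical estimate is such a `q`, and the bound becomes the
ℓ¹ error of the empirical distribution of the last state over `m` samples, whose expectation is
at most `√((|S| - 1) / m)` by the binomial variance and Cauchy–Schwarz.
-/

section WeightedSums

variable {ι : Type*} [Fintype ι]

theorem eq_zero_of_sum_eq_sum_univ {f : ι → ℝ} {G : Finset ι} (hf : ∀ i, 0 ≤ f i)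
    (hG : ∑ i ∈ G, f i = ∑ i, f i) {j : ι} (hj : j ∉ G) : f j = 0 := by
  classical
  have hcompl : ∑ i ∈ Gᶜ, f i = 0 := by
    rw [← sum_add_sum_compl G f] at hG
    linarith
  exact (sum_eq_zero_iff_of_nonneg fun i _ => hf i).1 hcompl j (mem_compl.2 hj)

theorem sum_mul_abs_le_sqrt_sum_mul_sq {W g : ι → ℝ} (hW : ∀ i, 0 ≤ W i)
    (hW1 : ∑ i, W i = 1) : ∑ i, W i * |g i| ≤ √(∑ i, W i * g i ^ 2) := by
  have hcs := Real.sum_sqrt_mul_sqrt_le univ hW fun i => mul_nonneg (hW i) (sq_nonneg (g i))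
  have hterm : ∀ i, √(W i) * √(W i * g i ^ 2) = W i * |g i| := fun i => by
    rw [Real.sqrt_mul (hW i), Real.sqrt_sq_eq_abs, ← mul_assoc, Real.mul_self_sqrt (hW i)]
  simpa only [hterm, hW1, Real.sqrt_one, one_mul] using hcs

theorem sum_sqrt_mul_one_sub_le {p : ι → ℝ} (hp : ∀ i, 0 ≤ p i) (hp1 : ∑ i, p i = 1) :
    ∑ i, √(p i * (1 - p i)) ≤ √(Fintype.card ι - 1) := by
  have hvar : ∀ i, 0 ≤ p i * (1 - p i) := fun i =>
    mul_nonneg (hp i) (by linarith [hp1 ▸ single_le_sum (fun j _ => hp j) (mem_univ i)])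
  have hsum : ∑ i, p i * (1 - p i) = 1 - ∑ i, p i ^ 2 := by
    simp only [mul_one_sub, sum_sub_distrib, hp1, sq]
  have hpow := sq_sum_le_card_mul_sum_sq (s := univ) (f := p)
  have hsqrt := sq_sum_le_card_mul_sum_sq (s := univ) (f := fun i => √(p i * (1 - p i)))
  simp only [Real.sq_sqrt (hvar _), hsum, hp1, card_univ] at hpow hsqrt
  exact Real.le_sqrt_of_sq_le (by nlinarith)

end WeightedSums

section IidSamples

variable {T : Type*} [Fintype T] {w : T → ℝ} {m : ℕ}

theorem sum_prod_mul_prod (w : T → ℝ) (F : Fin m → T → ℝ) :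
    ∑ D : Fin m → T, (∏ i, w (D i)) * ∏ i, F i (D i) = ∏ i, ∑ t, w t * F i t := by
  rw [Fintype.prod_sum]
  simp only [prod_mul_distrib]

theorem sum_prod_eq_one (hw : ∑ t, w t = 1) : ∑ D : Fin m → T, ∏ i, w (D i) = 1 := by
  simpa [hw] using sum_prod_mul_prod (m := m) w fun _ _ => 1

theorem sum_prod_mul_apply_mul_apply (hw : ∑ t, w t = 1) (F G : T → ℝ) (i j : Fin m) :
    ∑ D : Fin m → T, (∏ k, w (D k)) * (F (D i) * G (D j)) =
      if i = j then ∑ t, w t * (F t * G t) else (∑ t, w t * F t) * ∑ t, w t * G t := by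
  split_ifs with hij
  · subst hij
    simpa [mul_ite, sum_ite_irrel, hw] using
      sum_prod_mul_prod w fun k t => if k = i then F t * G t else 1
  · have hprod : ∀ D : Fin m → T,
        ∏ k, (if k = i then F (D k) else 1) * (if k = j then G (D k) else 1) = F (D i) * G (D j) :=
      fun D => by simp only [prod_mul_distrib, prod_ite_eq', mem_univ, if_true]
    have hmean : ∀ k, ∑ t, w t * ((if k = i then F t else 1) * (if k = j then G t else 1)) =
        (if k = i then ∑ t, w t * F t else 1) * (if k = j then ∑ t, w t * G t else 1) := by
      intro k
      by_cases hi : k = i <;> by_cases hj : k = j <;> simp_all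
    simpa only [hprod, hmean, prod_mul_distrib, prod_ite_eq', mem_univ, if_true] using
      sum_prod_mul_prod w fun k t => (if k = i then F t else 1) * (if k = j then G t else 1)

theorem sum_prod_mul_sq_sum_apply (hw : ∑ t, w t = 1) {Z : T → ℝ} (hZ : ∑ t, w t * Z t = 0) :
    ∑ D : Fin m → T, (∏ k, w (D k)) * (∑ i, Z (D i)) ^ 2 = m * ∑ t, w t * Z t ^ 2 := by
  calc ∑ D : Fin m → T, (∏ k, w (D k)) * (∑ i, Z (D i)) ^ 2
      = ∑ i, ∑ j, ∑ D : Fin m → T, (∏ k, w (D k)) * (Z (D i) * Z (D j)) := by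
        simp_rw [sq, sum_mul_sum, mul_sum]
        rw [sum_comm]
        exact sum_congr rfl fun i _ => sum_comm
    _ = ∑ i : Fin m, ∑ j : Fin m, if i = j then ∑ t, w t * Z t ^ 2 else 0 := by
        simp only [sum_prod_mul_apply_mul_apply hw, hZ, mul_zero, sq]
    _ = m * ∑ t, w t * Z t ^ 2 := by simp

end IidSamples

section EmpiricalFrequency

variable {T X : Type*} [Fintype T] [DecidableEq X] {w : T → ℝ} {m : ℕ}

noncomputable def empFreq (f : T → X) (D : Fin m → T) (x : X) : ℝ :=
  (∑ i, if f (D i) = x then (1 : ℝ) else 0) / m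

theorem sum_prod_mul_sq_empFreq_sub (hw : ∑ t, w t = 1) (hm : m ≠ 0) (f : T → X) (x : X)
    {p : ℝ} (hp : ∑ t, w t * (if f t = x then 1 else 0) = p) :
    ∑ D : Fin m → T, (∏ k, w (D k)) * (empFreq f D x - p) ^ 2 = p * (1 - p) / m := by
  set Z : T → ℝ := fun t => (if f t = x then 1 else 0) - p
  have hZ : ∑ t, w t * Z t = 0 := by
    simp only [Z, mul_sub, sum_sub_distrib, hp, ← sum_mul, hw, one_mul, sub_self]
  have hZsq : ∑ t, w t * Z t ^ 2 = p * (1 - p) := by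
    have : ∀ t, w t * Z t ^ 2 = (1 - 2 * p) * (w t * if f t = x then 1 else 0) + p ^ 2 * w t :=
      fun t => by simp only [Z]; split_ifs <;> ring
    simp only [this, sum_add_distrib, ← mul_sum, hp, hw]
    ring
  have hdev : ∀ D : Fin m → T, empFreq f D x - p = (∑ i, Z (D i)) / m := fun D => by
    simp only [empFreq, Z, sum_sub_distrib, sum_const, card_univ, Fintype.card_fin, nsmul_eq_mul]
    field_simp
  simp only [hdev, div_pow, mul_div_assoc', ← sum_div, sum_prod_mul_sq_sum_apply hw hZ, hZsq]
  field_simp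

theorem sum_prod_mul_sum_abs_empFreq_sub_le [Fintype X] (hw0 : ∀ t, 0 ≤ w t) (hw : ∑ t, w t = 1)
    (hm : m ≠ 0) (f : T → X) {p : X → ℝ} (hp : ∀ x, ∑ t, w t * (if f t = x then 1 else 0) = p x) :
    ∑ D : Fin m → T, (∏ k, w (D k)) * ∑ x, |empFreq f D x - p x| ≤
      √((Fintype.card X - 1) / m) := by
  have hp0 : ∀ x, 0 ≤ p x := fun x =>
    hp x ▸ sum_nonneg fun t _ => mul_nonneg (hw0 t) (by split_ifs <;> norm_num)
  have hp1 : ∑ x, p x = 1 := by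
    simp only [← hp]
    rw [sum_comm]
    simp [hw]
  have hW0 : ∀ D : Fin m → T, 0 ≤ ∏ k, w (D k) := fun D => prod_nonneg fun k _ => hw0 (D k)
  calc ∑ D : Fin m → T, (∏ k, w (D k)) * ∑ x, |empFreq f D x - p x|
      = ∑ x, ∑ D : Fin m → T, (∏ k, w (D k)) * |empFreq f D x - p x| := by
        simp only [mul_sum]
        exact sum_comm
    _ ≤ ∑ x, √(p x * (1 - p x) / m) := sum_le_sum fun x _ => by
        rw [← sum_prod_mul_sq_empFreq_sub hw hm f x (hp x)]
        exact sum_mul_abs_le_sqrt_sum_mul_sq hW0 (sum_prod_eq_one hw)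
    _ = (∑ x, √(p x * (1 - p x))) / √m := by
        simp only [Real.sqrt_div' _ (Nat.cast_nonneg m), sum_div]
    _ ≤ √(Fintype.card X - 1) / √m := by
        gcongr
        exact sum_sqrt_mul_one_sub_le hp0 hp1
    _ = √((Fintype.card X - 1) / m) := (Real.sqrt_div' _ (Nat.cast_nonneg m)).symm

end EmpiricalFrequency

theorem sum_sum_eq_sum_mem_of_eq_zero {S A : Type*} [Fintype S] [Fintype A] {G : Finset S}
    {a1 : A} {f : S → A → ℝ} (hf : ∀ s a, (s ∉ G ∨ a ≠ a1) → f s a = 0) :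
    ∑ s, ∑ a, f s a = ∑ s ∈ G, f s a1 := by
  rw [← sum_subset (subset_univ G) fun s _ hs => sum_eq_zero fun a _ => hf s a (Or.inl hs)]
  exact sum_congr rfl fun s _ =>
    sum_eq_single a1 (fun a _ ha => hf s a (Or.inr ha)) (absurd (mem_univ a1))

theorem eq_or_le_of_abs_sub_add_sub_le {y d q : ℝ} (hyd : y ≤ d)
    (h : |y - q| + (d - y) ≤ |d - q|) : y = d ∨ q ≤ y := by
  rcases le_total q y with hqy | hyq
  · exact Or.inr hqy
  rw [abs_of_nonpos (by linarith : y - q ≤ 0)] at h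
  rcases le_total q d with hqd | hdq
  · rw [abs_of_nonneg (by linarith : 0 ≤ d - q)] at h
    exact Or.inr (by linarith)
  · rw [abs_of_nonpos (by linarith : d - q ≤ 0)] at h
    exact Or.inl (by linarith)

section IsPolicy

variable {S A : Type*} [Fintype A] {π : ℕ → S → A → ℝ}

theorem IsPolicy.le_one (hπ : IsPolicy π) (h : ℕ) (s : S) (a : A) : π h s a ≤ 1 :=
  (hπ h s).2 ▸ single_le_sum (fun b _ => (hπ h s).1 b) (mem_univ a)

theorem IsPolicy.eq_zero_of_ne (hπ : IsPolicy π) {h : ℕ} {s : S} {a₀ a : A}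
    (ha₀ : π h s a₀ = 1) (ha : a ≠ a₀) : π h s a = 0 := by
  classical
  exact eq_zero_of_sum_eq_sum_univ (hπ h s).1 (by rw [sum_singleton, ha₀, (hπ h s).2])
    (notMem_singleton.2 ha)

end IsPolicy

section Policies

variable {S A : Type*} [Fintype S] [Fintype A] {ρ : S → ℝ} {P : ℕ → S → A → S → ℝ}
  {π : ℕ → S → A → ℝ}

theorem stateDist_succ (h : ℕ) (t : S) :
    stateDist ρ P π (h + 1) t = ∑ s, ∑ a, stateDist ρ P π h s * π h s a * P h s a t :=
  rfl

theorem stateDist_nonneg (hρ : IsInitDist ρ) (hP : IsTransition P) (hπ : IsPolicy π)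
    (h : ℕ) (s : S) : 0 ≤ stateDist ρ P π h s := by
  induction h generalizing s with
  | zero => exact hρ.1 s
  | succ h ih =>
    exact sum_nonneg fun s' _ => sum_nonneg fun a _ =>
      mul_nonneg (mul_nonneg (ih s') ((hπ h s').1 a)) ((hP h s' a).1 s)

theorem sum_stateDist (hρ : IsInitDist ρ) (hP : IsTransition P) (hπ : IsPolicy π) (h : ℕ) :
    ∑ s, stateDist ρ P π h s = 1 := by
  induction h with
  | zero => exact hρ.2
  | succ h ih =>
    calc ∑ t, stateDist ρ P π (h + 1) t
        = ∑ s, ∑ a, stateDist ρ P π h s * π h s a * ∑ t, P h s a t := by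
          simp only [stateDist_succ, mul_sum]
          rw [sum_comm]
          exact sum_congr rfl fun s _ => sum_comm
      _ = 1 := by simp only [(hP _ _ _).2, mul_one, ← mul_sum, (hπ _ _).2, ih]

theorem saDist_eq_stateDist_of_eq_one {h : ℕ} {s : S} {a : A} (h1 : π h s a = 1) :
    saDist ρ P π h s a = stateDist ρ P π h s := by
  rw [saDist, h1, mul_one]

theorem saDist_succ (h : ℕ) (s : S) (a : A) :
    saDist ρ P π (h + 1) s a =
      ∑ x : S × A, saDist ρ P π h x.1 x.2 * (P h x.1 x.2 s * π (h + 1) s a) := by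
  simp only [saDist, stateDist_succ, Fintype.sum_prod_type, sum_mul, mul_assoc]

theorem saDist_nonneg (hρ : IsInitDist ρ) (hP : IsTransition P) (hπ : IsPolicy π)
    (h : ℕ) (s : S) (a : A) : 0 ≤ saDist ρ P π h s a :=
  mul_nonneg (stateDist_nonneg hρ hP hπ h s) ((hπ h s).1 a)

theorem saDist_le_stateDist (hρ : IsInitDist ρ) (hP : IsTransition P) (hπ : IsPolicy π)
    (h : ℕ) (s : S) (a : A) : saDist ρ P π h s a ≤ stateDist ρ P π h s :=
  mul_le_of_le_one_right (stateDist_nonneg hρ hP hπ h s) (hπ.le_one h s a)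

theorem sum_saDist (hρ : IsInitDist ρ) (hP : IsTransition P) (hπ : IsPolicy π) (h : ℕ) :
    ∑ s, ∑ a, saDist ρ P π h s a = 1 := by
  simp only [saDist, ← mul_sum, (hπ _ _).2, mul_one, sum_stateDist hρ hP hπ]

theorem trajProb_nonneg (hρ : IsInitDist ρ) (hP : IsTransition P) (hπ : IsPolicy π) (H : ℕ)
    (t : ℕ → S × A) : 0 ≤ trajProb ρ P π H t :=
  mul_nonneg (mul_nonneg (hρ.1 _) ((hπ _ _).1 _))
    (prod_nonneg fun _ _ => mul_nonneg ((hP _ _ _).1 _) ((hπ _ _).1 _))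

theorem sum_sum_abs_sub_of_eq_zero {G : Finset S} {a1 : A} {f g : S → A → ℝ}
    (hf : ∀ s a, 0 ≤ f s a) (hg : ∀ s a, (s ∉ G ∨ a ≠ a1) → g s a = 0) :
    ∑ s, ∑ a, |f s a - g s a| = ∑ s, ∑ a, f s a + ∑ s ∈ G, (|f s a1 - g s a1| - f s a1) := by
  rw [← sum_sum_eq_sum_mem_of_eq_zero (f := fun s a => |f s a - g s a| - f s a)
    fun s a hsa => by rw [hg s a hsa, sub_zero, abs_of_nonneg (hf s a), sub_self]]
  simp only [← sum_add_distrib, add_sub_cancel]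

theorem vailLoss_sub_expert [DecidableEq S] {G : Finset S} {a1 : A} {πE : ℕ → S → A → ℝ}
    {q : ℕ → S → A → ℝ} {H : ℕ} (hρ : IsInitDist ρ) (hP : IsTransition P) (hE : IsPolicy πE)
    (hEa : ∀ h s, πE h s a1 = 1) (hπ : IsPolicy π) (hq : AdmissibleEst G a1 q H) :
    vailLoss ρ P π q H - vailLoss ρ P πE q H =
      ∑ h ∈ range H, ∑ s ∈ G, (|saDist ρ P π h s a1 - q h s a1| +
        (stateDist ρ P πE h s - saDist ρ P π h s a1) - |stateDist ρ P πE h s - q h s a1|) := by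
  rw [vailLoss, vailLoss, ← sum_sub_distrib]
  refine sum_congr rfl fun h hh => ?_
  have hq0 := (hq h (mem_range.1 hh)).2.1
  rw [sum_sum_abs_sub_of_eq_zero (saDist_nonneg hρ hP hπ h) hq0,
    sum_sum_abs_sub_of_eq_zero (saDist_nonneg hρ hP hE h) hq0, sum_saDist hρ hP hπ,
    sum_saDist hρ hP hE, add_sub_add_left_eq_sub, ← sum_sub_distrib]
  simp only [saDist_eq_stateDist_of_eq_one (hEa h _)]
  exact sum_congr rfl fun s _ => by ring

end Policies

namespace ResetCliff

variable {S A : Type*} [Fintype S] [Fintype A] [DecidableEq S] {ρ : S → ℝ}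
  {P : ℕ → S → A → S → ℝ} {r : ℕ → S → A → ℝ} {G : Finset S} {a1 : A}
  {π πE : ℕ → S → A → ℝ}

theorem transition_eq_zero_of_notMem (hRC : ResetCliff ρ P r G a1) (hP : IsTransition P)
    {h : ℕ} {s t : S} (hs : s ∈ G) (ht : t ∉ G) : P h s a1 t = 0 := by
  obtain ⟨-, -, -, hstay, -⟩ := hRC
  exact eq_zero_of_sum_eq_sum_univ (hP h s a1).1 (by rw [hstay h s hs, (hP h s a1).2]) ht

theorem transition_eq_zero_of_mem (hRC : ResetCliff ρ P r G a1) (hP : IsTransition P)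
    {h : ℕ} {s t : S} {a : A} (hsa : s ∉ G ∨ a ≠ a1) (ht : t ∈ G) : P h s a t = 0 := by
  obtain ⟨-, -, -, -, -, hleave, hstuck, -, -⟩ := hRC
  have hout : ∑ t ∈ Gᶜ, P h s a t = 1 := by
    by_cases hs : s ∈ G
    · exact hleave h s hs a (hsa.resolve_left (not_not.2 hs))
    · exact hstuck h s hs a
  exact eq_zero_of_sum_eq_sum_univ (hP h s a).1 (by rw [hout, (hP h s a).2])
    (notMem_compl.2 ht)

theorem stateDist_expert_eq_zero (hRC : ResetCliff ρ P r G a1) (hP : IsTransition P)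
    (hE : IsPolicy πE) (hEa : ∀ h s, πE h s a1 = 1) (h : ℕ) {t : S} (ht : t ∉ G) :
    stateDist ρ P πE h t = 0 := by
  induction h generalizing t with
  | zero =>
    obtain ⟨-, -, -, -, -, -, -, -, hρG⟩ := hRC
    exact hρG t ht
  | succ h ih =>
    refine sum_eq_zero fun s _ => sum_eq_zero fun a _ => ?_
    by_cases ha : a = a1
    · subst ha
      by_cases hs : s ∈ G
      · rw [transition_eq_zero_of_notMem hRC hP hs ht, mul_zero]
      · rw [ih hs, zero_mul, zero_mul]
    · rw [hE.eq_zero_of_ne (hEa h s) ha, mul_zero, zero_mul]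

theorem sum_stateDist_expert (hRC : ResetCliff ρ P r G a1) (hρ : IsInitDist ρ)
    (hP : IsTransition P) (hE : IsPolicy πE) (hEa : ∀ h s, πE h s a1 = 1) (h : ℕ) :
    ∑ s ∈ G, stateDist ρ P πE h s = 1 := by
  rw [← sum_stateDist hρ hP hE h]
  exact sum_subset (subset_univ G) fun t _ ht => stateDist_expert_eq_zero hRC hP hE hEa h ht

theorem stateDist_succ_of_mem (hRC : ResetCliff ρ P r G a1) (hP : IsTransition P) (h : ℕ)
    {t : S} (ht : t ∈ G) :
    stateDist ρ P π (h + 1) t = ∑ s ∈ G, saDist ρ P π h s a1 * P h s a1 t :=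
  sum_sum_eq_sum_mem_of_eq_zero fun _ _ hsa => by
    rw [transition_eq_zero_of_mem hRC hP hsa ht, mul_zero]

theorem stateDist_le_expert (hRC : ResetCliff ρ P r G a1) (hρ : IsInitDist ρ)
    (hP : IsTransition P) (hEa : ∀ h s, πE h s a1 = 1) (hπ : IsPolicy π)
    (h : ℕ) : ∀ t ∈ G, stateDist ρ P π h t ≤ stateDist ρ P πE h t := by
  induction h with
  | zero => exact fun _ _ => le_rfl
  | succ h ih =>
    intro t ht
    rw [stateDist_succ_of_mem hRC hP h ht, stateDist_succ_of_mem hRC hP h ht]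
    refine sum_le_sum fun s hs => mul_le_mul_of_nonneg_right ?_ ((hP h s a1).1 t)
    rw [saDist_eq_stateDist_of_eq_one (hEa h s)]
    exact (saDist_le_stateDist hρ hP hπ h s a1).trans (ih s hs)

theorem saDist_le_expert (hRC : ResetCliff ρ P r G a1) (hρ : IsInitDist ρ)
    (hP : IsTransition P) (hEa : ∀ h s, πE h s a1 = 1) (hπ : IsPolicy π)
    (h : ℕ) {s : S} (hs : s ∈ G) : saDist ρ P π h s a1 ≤ stateDist ρ P πE h s :=
  (saDist_le_stateDist hρ hP hπ h s a1).trans (stateDist_le_expert hRC hρ hP hEa hπ h s hs)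

theorem saDist_succ_lt_expert (hRC : ResetCliff ρ P r G a1) (hρ : IsInitDist ρ)
    (hP : IsTransition P) (hEa : ∀ h s, πE h s a1 = 1) (hπ : IsPolicy π)
    {h : ℕ} {s : S} (hs : s ∈ G) (hlt : saDist ρ P π h s a1 < stateDist ρ P πE h s)
    {t : S} (ht : t ∈ G) : saDist ρ P π (h + 1) t a1 < stateDist ρ P πE (h + 1) t := by
  have hpos : ∀ h, ∀ s ∈ G, ∀ t ∈ G, 0 < P h s a1 t := hRC.2.2.2.2.1
  calc saDist ρ P π (h + 1) t a1
      ≤ stateDist ρ P π (h + 1) t := saDist_le_stateDist hρ hP hπ (h + 1) t a1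
    _ = ∑ s ∈ G, saDist ρ P π h s a1 * P h s a1 t := stateDist_succ_of_mem hRC hP h ht
    _ < ∑ s ∈ G, saDist ρ P πE h s a1 * P h s a1 t := by
        simp only [saDist_eq_stateDist_of_eq_one (hEa h _)]
        exact sum_lt_sum
          (fun s' hs' => mul_le_mul_of_nonneg_right
            (saDist_le_expert hRC hρ hP hEa hπ h hs') ((hP h s' a1).1 t))
          ⟨s, hs, mul_lt_mul_of_pos_right hlt (hpos h s hs t ht)⟩
    _ = stateDist ρ P πE (h + 1) t := (stateDist_succ_of_mem hRC hP h ht).symm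

theorem policyValue_eq (hRC : ResetCliff ρ P r G a1) (π : ℕ → S → A → ℝ) (H : ℕ) :
    policyValue ρ P π r H = ∑ h ∈ range H, ∑ s ∈ G, saDist ρ P π h s a1 := by
  obtain ⟨-, hr1, hr0, -⟩ := hRC
  refine sum_congr rfl fun h _ => ?_
  rw [sum_sum_eq_sum_mem_of_eq_zero fun s a hsa => by rw [hr0 h s a hsa, mul_zero]]
  exact sum_congr rfl fun s hs => by rw [hr1 h s hs, mul_one]

theorem eq_or_le_of_vailLoss_le (hRC : ResetCliff ρ P r G a1) (hρ : IsInitDist ρ)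
    (hP : IsTransition P) (hE : IsPolicy πE) (hEa : ∀ h s, πE h s a1 = 1) (hπ : IsPolicy π)
    {q : ℕ → S → A → ℝ} {H : ℕ} (hq : AdmissibleEst G a1 q H)
    (hle : vailLoss ρ P π q H ≤ vailLoss ρ P πE q H) {h : ℕ} (hh : h < H) {s : S}
    (hs : s ∈ G) :
    saDist ρ P π h s a1 = stateDist ρ P πE h s ∨ q h s a1 ≤ saDist ρ P π h s a1 := by
  have hexcess : ∀ h ∈ range H, ∀ s ∈ G, 0 ≤ |saDist ρ P π h s a1 - q h s a1| +
      (stateDist ρ P πE h s - saDist ρ P π h s a1) - |stateDist ρ P πE h s - q h s a1| :=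
    fun h _ s hs => by
      have := abs_sub_le (stateDist ρ P πE h s) (saDist ρ P π h s a1) (q h s a1)
      rw [abs_of_nonneg (sub_nonneg.2 (saDist_le_expert hRC hρ hP hEa hπ h hs))] at this
      linarith
  have hsum := vailLoss_sub_expert hρ hP hE hEa hπ hq
  have hexcess_le : |saDist ρ P π h s a1 - q h s a1| +
      (stateDist ρ P πE h s - saDist ρ P π h s a1) - |stateDist ρ P πE h s - q h s a1| ≤ 0 :=
    (single_le_sum (hexcess h (mem_range.2 hh)) hs).trans <|
      (single_le_sum (fun h hh => sum_nonneg (hexcess h hh)) (mem_range.2 hh)).trans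
        (by linarith)
  exact eq_or_le_of_abs_sub_add_sub_le (saDist_le_expert hRC hρ hP hEa hπ h hs)
    (by linarith)

theorem saDist_eq_expert_of_vailLoss_le (hRC : ResetCliff ρ P r G a1) (hρ : IsInitDist ρ)
    (hP : IsTransition P) (hE : IsPolicy πE) (hEa : ∀ h s, πE h s a1 = 1) (hπ : IsPolicy π)
    {q : ℕ → S → A → ℝ} {H : ℕ} (hq : AdmissibleEst G a1 q H)
    (hle : vailLoss ρ P π q H ≤ vailLoss ρ P πE q H) {h : ℕ} (hh : h + 1 < H) {s : S}
    (hs : s ∈ G) : saDist ρ P π h s a1 = stateDist ρ P πE h s := by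
  refine (saDist_le_expert hRC hρ hP hEa hπ h hs).eq_of_not_lt fun hlt => lt_irrefl (1 : ℝ) ?_
  have hdeficit : ∀ t ∈ G, saDist ρ P π (h + 1) t a1 < stateDist ρ P πE (h + 1) t :=
    fun t ht => saDist_succ_lt_expert hRC hρ hP hEa hπ hs hlt ht
  calc (1 : ℝ) = ∑ t ∈ G, q (h + 1) t a1 := (hq (h + 1) hh).2.2.symm
    _ ≤ ∑ t ∈ G, saDist ρ P π (h + 1) t a1 := sum_le_sum fun t ht =>
        (eq_or_le_of_vailLoss_le hRC hρ hP hE hEa hπ hq hle hh ht).resolve_left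
          (hdeficit t ht).ne
    _ < ∑ t ∈ G, stateDist ρ P πE (h + 1) t := sum_lt_sum_of_nonempty hRC.1 hdeficit
    _ = 1 := sum_stateDist_expert hRC hρ hP hE hEa (h + 1)

theorem value_gap_le (hRC : ResetCliff ρ P r G a1) (hρ : IsInitDist ρ)
    (hP : IsTransition P) (hE : IsPolicy πE) (hEa : ∀ h s, πE h s a1 = 1) (hπ : IsPolicy π)
    {q : ℕ → S → A → ℝ} {n : ℕ} (hq : AdmissibleEst G a1 q (n + 1))
    (hle : vailLoss ρ P π q (n + 1) ≤ vailLoss ρ P πE q (n + 1)) :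
    policyValue ρ P πE r (n + 1) - policyValue ρ P π r (n + 1) ≤
      ∑ s ∈ G, |stateDist ρ P πE n s - q n s a1| := by
  simp only [policyValue_eq hRC, ← sum_sub_distrib, saDist_eq_stateDist_of_eq_one (hEa _ _)]
  rw [sum_range_succ, sum_eq_zero fun h hh => sum_eq_zero fun s hs => by
    rw [saDist_eq_expert_of_vailLoss_le hRC hρ hP hE hEa hπ hq hle
      (by simpa using mem_range.1 hh) hs, sub_self], zero_add]
  refine sum_le_sum fun s hs => ?_
  rcases eq_or_le_of_vailLoss_le hRC hρ hP hE hEa hπ hq hle n.lt_succ_self hs with heq | hqle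
  · rw [heq, sub_self]
    exact abs_nonneg _
  · exact le_abs.2 (Or.inl (by linarith))

end ResetCliff

theorem extendTraj_of_lt {S A : Type*} [Nonempty S] [Nonempty A] {H : ℕ} (tr : Fin H → S × A)
    {k : ℕ} (hk : k < H) :
    extendTraj tr k = tr ⟨k, hk⟩ := by
  simp [extendTraj, Nat.zero_lt_of_lt hk, Nat.mod_eq_of_lt hk]

section Trajectories

variable {S A : Type*} [Fintype S] [Fintype A] [Nonempty S] [Nonempty A] {ρ : S → ℝ}
  {P : ℕ → S → A → S → ℝ} {π : ℕ → S → A → ℝ}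

theorem trajProb_extendTraj_snoc {n : ℕ} (tr : Fin (n + 1) → S × A) (x : S × A) :
    trajProb ρ P π (n + 2) (extendTraj (Fin.snoc tr x : Fin (n + 2) → S × A)) =
      trajProb ρ P π (n + 1) (extendTraj tr) *
        (P n (tr (Fin.last n)).1 (tr (Fin.last n)).2 x.1 * π (n + 1) x.1 x.2) := by
  have hinit : ∀ k ≤ n, extendTraj (Fin.snoc tr x : Fin (n + 2) → S × A) k = extendTraj tr k :=
    fun k hk => by
      rw [extendTraj_of_lt _ (by omega), extendTraj_of_lt _ (by omega)]
      exact Fin.snoc_castSucc (α := fun _ => S × A) (i := ⟨k, by omega⟩) ..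
  have hlast : extendTraj (Fin.snoc tr x : Fin (n + 2) → S × A) (n + 1) = x := by
    rw [extendTraj_of_lt _ (by omega)]
    exact Fin.snoc_last (α := fun _ => S × A) ..
  rw [trajProb, trajProb, show n + 2 - 1 = n + 1 from rfl, Nat.add_sub_cancel, prod_range_succ,
    hinit 0 (Nat.zero_le n), hinit n le_rfl, hlast, extendTraj_of_lt tr (Nat.lt_succ_self n),
    prod_congr rfl fun ℓ hℓ => by
      rw [hinit ℓ (by simp at hℓ; omega), hinit (ℓ + 1) (by simp at hℓ; omega)]]
  simp only [Fin.last, mul_assoc]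

theorem sum_trajProb_mul_last (φ : S × A → ℝ) (n : ℕ) :
    ∑ tr : Fin (n + 1) → S × A, trajProb ρ P π (n + 1) (extendTraj tr) * φ (tr (Fin.last n)) =
      ∑ x : S × A, saDist ρ P π n x.1 x.2 * φ x := by
  induction n generalizing φ with
  | zero =>
    rw [← (Equiv.funUnique (Fin 1) (S × A)).sum_comp]
    refine sum_congr rfl fun x _ => ?_
    simp [trajProb, extendTraj, saDist, stateDist]
  | succ n ih =>
    have hsplit : ∀ F : (Fin (n + 2) → S × A) → ℝ,
        ∑ tr, F tr = ∑ tr : Fin (n + 1) → S × A, ∑ x, F (Fin.snoc tr x) := fun F => by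
      rw [← (Fin.snocEquiv fun _ => S × A).sum_comp, Fintype.sum_prod_type, sum_comm]
      rfl
    simp only [hsplit, Fin.snoc_last, trajProb_extendTraj_snoc, mul_assoc, ← mul_sum]
    rw [ih fun z => ∑ x, P n z.1 z.2 x.1 * (π (n + 1) x.1 x.2 * φ x)]
    simp only [mul_sum, saDist_succ, sum_mul]
    rw [sum_comm]
    simp only [mul_assoc]

theorem sum_trajProb (hρ : IsInitDist ρ) (hP : IsTransition P) (hπ : IsPolicy π) (n : ℕ) :
    ∑ tr : Fin (n + 1) → S × A, trajProb ρ P π (n + 1) (extendTraj tr) = 1 := by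
  simpa [Fintype.sum_prod_type, sum_saDist hρ hP hπ] using
    sum_trajProb_mul_last (ρ := ρ) (P := P) (π := π) (fun _ => 1) n

theorem sum_trajProb_mul_ite_last [DecidableEq S] (hπ : IsPolicy π) (n : ℕ) (s : S) :
    ∑ tr : Fin (n + 1) → S × A,
        trajProb ρ P π (n + 1) (extendTraj tr) * (if (tr (Fin.last n)).1 = s then 1 else 0) =
      stateDist ρ P π n s := by
  rw [sum_trajProb_mul_last (fun x => if x.1 = s then 1 else 0), Fintype.sum_prod_type]
  simp [saDist, ← mul_sum, (hπ n s).2]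

end Trajectories

section EmpiricalEstimate

variable {S A : Type*} [Nonempty S] [Nonempty A] [DecidableEq S] [DecidableEq A]
  {G : Finset S} {a1 : A} {m : ℕ}

theorem admissibleEst_empEst [Fintype S] {H : ℕ} (hm : m ≠ 0) (D : Fin m → Fin H → S × A)
    (hD : ∀ i k, (D i k).1 ∈ G ∧ (D i k).2 = a1) : AdmissibleEst G a1 (empEst D) H := by
  intro h hh
  refine ⟨fun s a => ?_, fun s a hsa => ?_, ?_⟩
  · exact div_nonneg (sum_nonneg fun i _ => by split_ifs <;> norm_num) (Nat.cast_nonneg m)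
  · refine div_eq_zero_iff.2 (Or.inl (sum_eq_zero fun i _ => if_neg fun heq => ?_))
    obtain ⟨hG, ha⟩ := hD i ⟨h, hh⟩
    rw [extendTraj_of_lt _ hh] at heq
    rw [heq] at hG ha
    tauto
  · have hone : ∀ i, ∑ s ∈ G, (if extendTraj (D i) h = (s, a1) then (1 : ℝ) else 0) = 1 := by
      intro i
      obtain ⟨hG, ha⟩ := hD i ⟨h, hh⟩
      simp [extendTraj_of_lt _ hh, Prod.ext_iff, ha, hG]
    simp only [empEst, ← sum_div]
    rw [sum_comm]
    simp [hone, hm]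

theorem empEst_eq_empFreq {n : ℕ} (D : Fin m → Fin (n + 1) → S × A)
    (hD : ∀ i, (D i (Fin.last n)).2 = a1) (s : S) :
    empEst D n s a1 = empFreq (fun tr => (tr (Fin.last n)).1) D s := by
  simp only [empEst, empFreq, extendTraj_of_lt _ n.lt_succ_self]
  congr 1
  exact sum_congr rfl fun i _ => if_congr (by rw [Prod.ext_iff, ← hD i]; simp [Fin.last]) rfl rfl

end EmpiricalEstimate

namespace ResetCliff

variable {S A : Type*} [Fintype S] [Fintype A] [Nonempty S] [Nonempty A] [DecidableEq S]
  {ρ : S → ℝ} {P : ℕ → S → A → S → ℝ} {r : ℕ → S → A → ℝ} {G : Finset S} {a1 : A}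
  {π πE : ℕ → S → A → ℝ}

theorem mem_of_trajProb_ne_zero (hRC : ResetCliff ρ P r G a1) (hP : IsTransition P)
    (hE : IsPolicy πE) (hEa : ∀ h s, πE h s a1 = 1) {n : ℕ} {tr : Fin (n + 1) → S × A}
    (htr : trajProb ρ P πE (n + 1) (extendTraj tr) ≠ 0) (k : Fin (n + 1)) :
    (tr k).1 ∈ G ∧ (tr k).2 = a1 := by
  induction n with
  | zero =>
    obtain rfl := Fin.fin_one_eq_zero k
    have hinit : trajProb ρ P πE 1 (extendTraj tr) = ρ (tr 0).1 * πE 0 (tr 0).1 (tr 0).2 := by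
      simp [trajProb, extendTraj]
    rw [hinit] at htr
    obtain ⟨-, -, -, -, -, -, -, -, hρG⟩ := hRC
    exact ⟨by_contra fun h => left_ne_zero_of_mul htr (hρG _ h),
      by_contra fun h => right_ne_zero_of_mul htr (hE.eq_zero_of_ne (hEa 0 _) h)⟩
  | succ n ih =>
    induction tr using Fin.snocCases with
    | snoc tr x =>
    rw [trajProb_extendTraj_snoc] at htr
    obtain ⟨htr, hstep⟩ := mul_ne_zero_iff.1 htr
    obtain ⟨hG, ha⟩ := ih htr (Fin.last n)
    have hx : x.1 ∈ G ∧ x.2 = a1 :=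
      ⟨by_contra fun h => left_ne_zero_of_mul hstep
        (by rw [ha]; exact transition_eq_zero_of_notMem hRC hP hG h),
      by_contra fun h => right_ne_zero_of_mul hstep (hE.eq_zero_of_ne (hEa _ _) h)⟩
    induction k using Fin.lastCases with
    | last => simpa using hx
    | cast j => simpa using ih htr j

theorem prod_trajProb_mul_value_gap_le [DecidableEq A] (hRC : ResetCliff ρ P r G a1)
    (hρ : IsInitDist ρ) (hP : IsTransition P) (hE : IsPolicy πE) (hEa : ∀ h s, πE h s a1 = 1)
    (hπ : IsPolicy π) {m n : ℕ} (hm : m ≠ 0) (D : Fin m → Fin (n + 1) → S × A)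
    (hle : vailLoss ρ P π (empEst D) (n + 1) ≤ vailLoss ρ P πE (empEst D) (n + 1)) :
    (∏ i, trajProb ρ P πE (n + 1) (extendTraj (D i))) *
        (policyValue ρ P πE r (n + 1) - policyValue ρ P π r (n + 1)) ≤
      (∏ i, trajProb ρ P πE (n + 1) (extendTraj (D i))) *
        ∑ s, |empFreq (fun tr => (tr (Fin.last n)).1) D s - stateDist ρ P πE n s| := by
  by_cases hD : ∀ i, trajProb ρ P πE (n + 1) (extendTraj (D i)) ≠ 0
  swap
  · obtain ⟨i, hi⟩ := not_forall_not.1 hD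
    rw [prod_eq_zero (mem_univ i) hi, zero_mul, zero_mul]
  refine mul_le_mul_of_nonneg_left ?_ (prod_nonneg fun i _ => trajProb_nonneg hρ hP hE _ _)
  have hcons := fun i => mem_of_trajProb_ne_zero hRC hP hE hEa (hD i)
  calc policyValue ρ P πE r (n + 1) - policyValue ρ P π r (n + 1)
      ≤ ∑ s ∈ G, |stateDist ρ P πE n s - empEst D n s a1| :=
        value_gap_le hRC hρ hP hE hEa hπ (admissibleEst_empEst hm D hcons) hle
    _ = ∑ s ∈ G, |empFreq (fun tr => (tr (Fin.last n)).1) D s - stateDist ρ P πE n s| :=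
        sum_congr rfl fun s _ => by
          rw [empEst_eq_empFreq D (fun i => (hcons i _).2), abs_sub_comm]
    _ ≤ _ := sum_le_sum_of_subset_of_nonneg (subset_univ G) fun _ _ _ => abs_nonneg _

end ResetCliff

theorem vail_reset_cliff_horizon_free_general {S A : Type*} [Fintype S] [Fintype A]
    [Nonempty S] [Nonempty A] [DecidableEq S] [DecidableEq A]
    (ρ : S → ℝ) (P : ℕ → S → A → S → ℝ) (r : ℕ → S → A → ℝ) (πE : ℕ → S → A → ℝ)
    (G : Finset S) (a1 : A) (H : ℕ)
    (hρ : IsInitDist ρ) (hP : IsTransition P) (hE : IsPolicy πE)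
    (hRC : ResetCliff ρ P r G a1)
    (hEa : ∀ h s, πE h s a1 = 1)
    (m : ℕ) (hm : 1 ≤ m)
    (πAIL : (Fin m → Fin H → S × A) → ℕ → S → A → ℝ)
    (hpol : ∀ D, IsPolicy (πAIL D))
    (hmin : ∀ D, ∀ π, IsPolicy π →
        vailLoss ρ P (πAIL D) (empEst D) H ≤ vailLoss ρ P π (empEst D) H) :
    policyValue ρ P πE r H
        - datasetExp ρ P πE H m (fun D => policyValue ρ P (πAIL D) r H)
      ≤ 2 * Real.sqrt (((Fintype.card S : ℝ) - 1) / m) := by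
  cases H with
  | zero =>
    simp only [policyValue, datasetExp, range_zero, sum_empty, mul_zero, sum_const_zero, sub_zero]
    positivity
  | succ n =>
    have hm0 : m ≠ 0 := Nat.one_le_iff_ne_zero.1 hm
    have hw1 := sum_trajProb hρ hP hE n
    calc policyValue ρ P πE r (n + 1)
          - datasetExp ρ P πE (n + 1) m (fun D => policyValue ρ P (πAIL D) r (n + 1))
        = ∑ D : Fin m → Fin (n + 1) → S × A,
            (∏ i, trajProb ρ P πE (n + 1) (extendTraj (D i))) *
              (policyValue ρ P πE r (n + 1) - policyValue ρ P (πAIL D) r (n + 1)) := by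
          simp only [datasetExp, mul_sub, sum_sub_distrib, ← sum_mul, sum_prod_eq_one hw1,
            one_mul]
      _ ≤ ∑ D : Fin m → Fin (n + 1) → S × A,
            (∏ i, trajProb ρ P πE (n + 1) (extendTraj (D i))) *
              ∑ s, |empFreq (fun tr => (tr (Fin.last n)).1) D s - stateDist ρ P πE n s| :=
          sum_le_sum fun D _ => hRC.prod_trajProb_mul_value_gap_le hρ hP hE hEa (hpol D) hm0 D
            (hmin D πE hE)
      _ ≤ √((Fintype.card S - 1) / m) :=
          sum_prod_mul_sum_abs_empFreq_sub_le (fun _ => trajProb_nonneg hρ hP hE _ _) hw1 hm0 _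
            (sum_trajProb_mul_ite_last hE n)
      _ ≤ 2 * √((Fintype.card S - 1) / m) := by
          linarith [Real.sqrt_nonneg ((Fintype.card S - 1) / m)]

/-- on any Reset Cliff instance, with a dataset `D` of `m ≥ 1` i.i.d. expert
trajectories, the empirical MLE `empEst D`, and any choice `πAIL D` of global minimizer of the
VAIL objective, one has the horizon-free bound
`V^{πE} − E_D[V^{πAIL(D)}] ≤ 2 √((|S|−1)/m)`. -/
theorem vail_reset_cliff_horizon_free {S A : Type*} [Fintype S] [Fintype A]
    [Nonempty S] [Nonempty A] [DecidableEq S] [DecidableEq A]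
    (ρ : S → ℝ) (P : ℕ → S → A → S → ℝ) (r : ℕ → S → A → ℝ) (πE : ℕ → S → A → ℝ)
    (G : Finset S) (a1 : A) (H : ℕ) (hH : 1 ≤ H)
    (hρ : IsInitDist ρ) (hP : IsTransition P) (hr : IsReward r) (hE : IsPolicy πE)
    (hRC : ResetCliff ρ P r G a1)
    (hEa : ∀ h s, πE h s a1 = 1)
    (m : ℕ) (hm : 1 ≤ m)
    (πAIL : (Fin m → Fin H → S × A) → ℕ → S → A → ℝ)
    (hpol : ∀ D, IsPolicy (πAIL D))
    (hmin : ∀ D, ∀ π, IsPolicy π →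
        vailLoss ρ P (πAIL D) (empEst D) H ≤ vailLoss ρ P π (empEst D) H) :
    policyValue ρ P πE r H
        - datasetExp ρ P πE H m (fun D => policyValue ρ P (πAIL D) r H)
      ≤ 2 * Real.sqrt (((Fintype.card S : ℝ) - 1) / m) :=
  vail_reset_cliff_horizon_free_general ρ P r πE G a1 H hρ hP hE hRC hEa m hm πAIL hpol hmin
end

section
/- (Deterministic framework guarantee for AIL with unknown transitions.) Let S, A be finite nonempty sets, H ≥ 1, ρ an initial distribution on S, r_h : S×A → [0,1] rewards, and let P and P̂ be two transition functions on (S, A, H). Let π^E be any policy and let ε_RFE, ε_EST, ε_AIL ≥ 0. Suppose: (a) for every reward function w with w_h(s,a) ∈ [−1,1] and every policy π, |V^{π,P,w} − V^{π,P̂,w}| ≤ ε_RFE; (b) estimates Q_h : S×A → ℝ satisfy Σ_{h=1}^H Σ_{(s,a)} |Q_h(s,a) − P^{π^E,P}_h(s,a)| ≤ ε_EST; (c) a policy π̄ satisfies Σ_{h=1}^H Σ_{(s,a)} |P^{π̄,P̂}_h(s,a) − Q_h(s,a)| ≤ min over all policies π of Σ_{h=1}^H Σ_{(s,a)} |P^{π,P̂}_h(s,a)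 − Q_h(s,a)|, plus ε_AIL. Then V^{π^E,P,r} − V^{π̄,P,r} ≤ 2ε_EST + 2ε_RFE + ε_AIL. -/
open Finset

/-- deterministic framework guarantee for AIL with unknown transitions.
If (a) the learned model `Phat` evaluates every policy uniformly `εRFE`-accurately for all
rewards bounded in `[−1,1]`, (b) the estimates `Q` are `εEST`-accurate in ℓ₁ for the expert
state-action distributions under the true model `P`, and (c) `πbar` minimizes the ℓ₁
matching objective under `Phat` up to `εAIL`, then
`V^{πE,P,r} − V^{πbar,P,r} ≤ 2 εEST + 2 εRFE + εAIL`. -/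
theorem ail_unknown_transition_framework {S A : Type*} [Fintype S] [Fintype A]
    [Nonempty S] [Nonempty A]
    (ρ : S → ℝ) (P Phat : ℕ → S → A → S → ℝ) (r : ℕ → S → A → ℝ)
    (πE πbar : ℕ → S → A → ℝ) (Q : ℕ → S → A → ℝ) (H : ℕ) (hH : 1 ≤ H)
    (hρ : IsInitDist ρ) (hP : IsTransition P) (hPhat : IsTransition Phat)
    (hr : IsReward r) (hE : IsPolicy πE) (hbar : IsPolicy πbar)
    (εRFE εEST εAIL : ℝ) (hRFE0 : 0 ≤ εRFE) (hEST0 : 0 ≤ εEST) (hAIL0 : 0 ≤ εAIL)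
    (ha : ∀ w : ℕ → S → A → ℝ, (∀ h s a, -1 ≤ w h s a ∧ w h s a ≤ 1) →
        ∀ π, IsPolicy π →
          |policyValue ρ P π w H - policyValue ρ Phat π w H| ≤ εRFE)
    (hb : (∑ h ∈ Finset.range H, ∑ s : S, ∑ a : A, |Q h s a - saDist ρ P πE h s a|) ≤ εEST)
    (hc : ∀ π, IsPolicy π →
        vailLoss ρ Phat πbar Q H ≤ vailLoss ρ Phat π Q H + εAIL) :
    policyValue ρ P πE r H - policyValue ρ P πbar r H
      ≤ 2 * εEST + 2 * εRFE + εAIL := by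
  -- triangle inequality for nested sums
  have sum_tri : ∀ (f g k : ℕ → S → A → ℝ),
      (∑ h ∈ Finset.range H, ∑ s : S, ∑ a : A, |f h s a - k h s a|)
        ≤ (∑ h ∈ Finset.range H, ∑ s : S, ∑ a : A, |f h s a - g h s a|)
          + (∑ h ∈ Finset.range H, ∑ s : S, ∑ a : A, |g h s a - k h s a|) := by
    intro f g k
    rw [← Finset.sum_add_distrib]
    refine Finset.sum_le_sum fun h _ => ?_
    rw [← Finset.sum_add_distrib]
    refine Finset.sum_le_sum fun s _ => ?_
    rw [← Finset.sum_add_distrib]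
    refine Finset.sum_le_sum fun a _ => ?_
    exact abs_sub_le _ _ _
  -- sign trick: model error in ℓ₁ is at most εRFE
  have key1 : ∀ π, IsPolicy π →
      (∑ h ∈ Finset.range H, ∑ s : S, ∑ a : A,
        |saDist ρ Phat π h s a - saDist ρ P π h s a|) ≤ εRFE := by
    intro π hπ
    set w : ℕ → S → A → ℝ := fun h s a =>
      if 0 ≤ saDist ρ Phat π h s a - saDist ρ P π h s a then 1 else -1 with hw
    have hwb : ∀ h s a, -1 ≤ w h s a ∧ w h s a ≤ 1 := by
      intro h s a
      simp only [hw]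
      split_ifs <;> norm_num
    have heq : policyValue ρ Phat π w H - policyValue ρ P π w H
        = ∑ h ∈ Finset.range H, ∑ s : S, ∑ a : A,
            |saDist ρ Phat π h s a - saDist ρ P π h s a| := by
      unfold policyValue
      rw [← Finset.sum_sub_distrib]
      refine Finset.sum_congr rfl fun h _ => ?_
      rw [← Finset.sum_sub_distrib]
      refine Finset.sum_congr rfl fun s _ => ?_
      rw [← Finset.sum_sub_distrib]
      refine Finset.sum_congr rfl fun a _ => ?_
      simp only [hw]
      split_ifs with h'
      · rw [abs_of_nonneg h']; ring
      · rw [abs_of_neg (lt_of_not_ge h')]; ring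
    have habs := abs_le.mp (ha w hwb π hπ)
    linarith [habs.1, habs.2]
  -- value difference under P bounded by ℓ₁ distance of occupancy measures
  have key2 : policyValue ρ P πE r H - policyValue ρ P πbar r H
      ≤ ∑ h ∈ Finset.range H, ∑ s : S, ∑ a : A,
          |saDist ρ P πE h s a - saDist ρ P πbar h s a| := by
    unfold policyValue
    rw [← Finset.sum_sub_distrib]
    refine Finset.sum_le_sum fun h _ => ?_
    rw [← Finset.sum_sub_distrib]
    refine Finset.sum_le_sum fun s _ => ?_
    rw [← Finset.sum_sub_distrib]
    refine Finset.sum_le_sum fun a _ => ?_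
    have hr' := hr h s a
    have : saDist ρ P πE h s a * r h s a - saDist ρ P πbar h s a * r h s a
        = (saDist ρ P πE h s a - saDist ρ P πbar h s a) * r h s a := by ring
    rw [this]
    calc (saDist ρ P πE h s a - saDist ρ P πbar h s a) * r h s a
        ≤ |(saDist ρ P πE h s a - saDist ρ P πbar h s a) * r h s a| := le_abs_self _
      _ = |saDist ρ P πE h s a - saDist ρ P πbar h s a| * |r h s a| := abs_mul _ _
      _ ≤ |saDist ρ P πE h s a - saDist ρ P πbar h s a| * 1 := by
          exact mul_le_mul_of_nonneg_left (abs_le.mpr ⟨by linarith [hr'.1], hr'.2⟩)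
            (abs_nonneg _)
      _ = _ := mul_one _
  -- rewrite hb with abs_sub_comm
  have hb' : (∑ h ∈ Finset.range H, ∑ s : S, ∑ a : A,
      |saDist ρ P πE h s a - Q h s a|) ≤ εEST := by
    calc _ = ∑ h ∈ Finset.range H, ∑ s : S, ∑ a : A, |Q h s a - saDist ρ P πE h s a| := by
          simp_rw [abs_sub_comm]
      _ ≤ εEST := hb
  -- bound vailLoss of πbar under Phat
  have hLossE : vailLoss ρ Phat πE Q H ≤ εRFE + εEST := by
    unfold vailLoss
    calc (∑ h ∈ Finset.range H, ∑ s : S, ∑ a : A, |saDist ρ Phat πE h s a - Q h s a|)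
        ≤ (∑ h ∈ Finset.range H, ∑ s : S, ∑ a : A,
            |saDist ρ Phat πE h s a - saDist ρ P πE h s a|)
          + (∑ h ∈ Finset.range H, ∑ s : S, ∑ a : A,
            |saDist ρ P πE h s a - Q h s a|) := sum_tri _ _ _
      _ ≤ εRFE + εEST := add_le_add (key1 πE hE) hb'
  have hLossBar : vailLoss ρ Phat πbar Q H ≤ εRFE + εEST + εAIL := by
    calc vailLoss ρ Phat πbar Q H ≤ vailLoss ρ Phat πE Q H + εAIL := hc πE hE
      _ ≤ εRFE + εEST + εAIL := by linarith
  -- main chain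
  have main : (∑ h ∈ Finset.range H, ∑ s : S, ∑ a : A,
      |saDist ρ P πE h s a - saDist ρ P πbar h s a|)
      ≤ 2 * εEST + 2 * εRFE + εAIL := by
    have t1 := sum_tri (fun h s a => saDist ρ P πE h s a) (fun h s a => Q h s a)
      (fun h s a => saDist ρ P πbar h s a)
    have t2 := sum_tri (fun h s a => Q h s a) (fun h s a => saDist ρ Phat πbar h s a)
      (fun h s a => saDist ρ P πbar h s a)
    have h3 : (∑ h ∈ Finset.range H, ∑ s : S, ∑ a : A,
        |Q h s a - saDist ρ Phat πbar h s a|) ≤ εRFE + εEST + εAIL := by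
      calc _ = vailLoss ρ Phat πbar Q H := by
            unfold vailLoss; simp_rw [abs_sub_comm]
        _ ≤ εRFE + εEST + εAIL := hLossBar
    have h4 := key1 πbar hbar
    have h4' : (∑ h ∈ Finset.range H, ∑ s : S, ∑ a : A,
        |saDist ρ Phat πbar h s a - saDist ρ P πbar h s a|) ≤ εRFE := h4
    linarith [hb', t1, t2, h3, h4']
  linarith [key2, main]
end

section
/- Let A = (a_{ij}) ∈ ℝ^{m×n} with a_{ij} > 0 for all i, j, let c ∈ ℝ^m and d ∈ ℝ^n satisfy Σ_{i=1}^m c_i ≥ Σ_{i=1}^m Σ_{j=1}^n a_{ij} and d_j = Σ_{i=1}^m a_{ij} for each j. Consider f(x) = ‖c − Ax‖₁ − dᵀx = Σ_{i=1}^m |c_i − Σ_{j=1}^n a_{ij} x_j| − Σ_{j=1}^n d_j x_j for x ∈ [0,1]^n. Then the all-ones vector x* = (1,…,1) is the unique global minimizer of f over [0,1]^n. -/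
/-- let `A ∈ ℝ^{m×n}` have all entries positive, `c ∈ ℝ^m` with
`Σ_i c_i ≥ Σ_i Σ_j A_{ij}`, and `d_j = Σ_i A_{ij}`.  Then the all-ones vector is the unique
global minimizer over `[0,1]^n` of `f(x) = ‖c − A x‖₁ − dᵀ x`: every feasible `x ≠ 𝟙` has a
strictly larger objective value. -/
theorem ones_unique_minimizer {m n : ℕ} (hm : 0 < m) (hn : 0 < n)
    (A : Fin m → Fin n → ℝ) (c : Fin m → ℝ) (d : Fin n → ℝ)
    (hA : ∀ i j, 0 < A i j)
    (hc : (∑ i, ∑ j, A i j) ≤ ∑ i, c i)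
    (hd : ∀ j, d j = ∑ i, A i j) :
    ∀ x : Fin n → ℝ, (∀ j, 0 ≤ x j ∧ x j ≤ 1) → x ≠ (fun _ => 1) →
      ((∑ i, |c i - ∑ j, A i j * 1|) - ∑ j, d j * 1)
        < (∑ i, |c i - ∑ j, A i j * x j|) - ∑ j, d j * x j := by
  intro x hx hne
  set r : Fin m → ℝ := fun i => ∑ j, A i j with hr
  set s : Fin m → ℝ := fun i => ∑ j, A i j * x j with hs
  obtain ⟨j0, hj0⟩ : ∃ j, x j ≠ 1 := by
    by_contra h; push_neg at h; exact hne (funext h)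
  have hj0' : x j0 < 1 := lt_of_le_of_ne (hx j0).2 hj0
  have hsr : ∀ i, s i < r i := by
    intro i
    apply Finset.sum_lt_sum
    · intro j _; nlinarith [hA i j, (hx j).1, (hx j).2]
    · exact ⟨j0, Finset.mem_univ _, by nlinarith [hA i j0]⟩
  have hex : ∃ i, s i < c i := by
    by_contra h; push_neg at h
    have h1 : ∑ i, c i ≤ ∑ i, s i := Finset.sum_le_sum fun i _ => h i
    have h2 : ∑ i, s i < ∑ i, r i := Finset.sum_lt_sum (fun i _ => (hsr i).le)
      ⟨⟨0, hm⟩, Finset.mem_univ _, hsr _⟩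
    have h3 : (∑ i, ∑ j, A i j) = ∑ i, r i := rfl
    linarith
  obtain ⟨i0, hi0⟩ := hex
  have key : ∑ i, |c i - r i| < ∑ i, (|c i - s i| + (r i - s i)) := by
    apply Finset.sum_lt_sum
    · intro i _
      have h1 := abs_sub_le (c i) (s i) (r i)
      have h2 : |s i - r i| = r i - s i := by
        rw [abs_sub_comm, abs_of_nonneg (by linarith [hsr i])]
      linarith
    · refine ⟨i0, Finset.mem_univ _, ?_⟩
      have h1 := hsr i0
      rw [abs_of_pos (by linarith : (0:ℝ) < c i0 - s i0)]
      rcases abs_cases (c i0 - r i0) with ⟨h, _⟩ | ⟨h, _⟩ <;> linarith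
  have hsum : ∑ i, (r i - s i) = (∑ j, d j * 1) - ∑ j, d j * x j := by
    rw [Finset.sum_sub_distrib]
    have e1 : ∑ i, r i = ∑ j, d j * 1 := by
      simp only [hd, mul_one]; exact Finset.sum_comm
    have e2 : ∑ i, s i = ∑ j, d j * x j := by
      simp only [hd, Finset.sum_mul]; exact Finset.sum_comm
    rw [e1, e2]
  rw [Finset.sum_add_distrib, hsum] at key
  have hLHS : ∑ i, |c i - ∑ j, A i j * 1| = ∑ i, |c i - r i| := by
    simp [hr]
  rw [hLHS]
  linarith
end

section
/- Let A = (a_{ij}) ∈ ℝ^{m×n} with a_{ij} > 0 for all i, j, let c ∈ ℝ^m and d ∈ ℝ^n satisfy Σ_{i=1}^m c_i ≥ Σ_{i=1}^m Σ_{j=1}^n a_{ij} and d_j = Σ_{i=1}^m a_{ij} for each j, and let f(x) = ‖c − Ax‖₁ − dᵀx. Then for every x ∈ [0,1]^n, f(x) − f(𝟙) ≥ Σ_{j=1}^n (min_{i∈{1,…,m}} a_{ij}) · (1 − x_j), where 𝟙 = (1,…,1). -/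
/-- let `A ∈ ℝ^{m×n}` have all entries positive, `c ∈ ℝ^m` with
`Σ_i c_i ≥ Σ_i Σ_j A_{ij}`, and `d_j = Σ_i A_{ij}`, and let
`f(x) = ‖c − A x‖₁ − dᵀ x`.  Then for every `x ∈ [0,1]^n`,
`f(x) − f(𝟙) ≥ Σ_j (min_i A_{ij}) (1 − x_j)`. -/
theorem ones_minimizer_regularity {m n : ℕ} (hm : 0 < m) (hn : 0 < n)
    (A : Fin m → Fin n → ℝ) (c : Fin m → ℝ) (d : Fin n → ℝ)
    (hA : ∀ i j, 0 < A i j)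
    (hc : (∑ i, ∑ j, A i j) ≤ ∑ i, c i)
    (hd : ∀ j, d j = ∑ i, A i j) :
    ∀ x : Fin n → ℝ, (∀ j, 0 ≤ x j ∧ x j ≤ 1) →
      (∑ j, (⨅ i, A i j) * (1 - x j))
        ≤ ((∑ i, |c i - ∑ j, A i j * x j|) - ∑ j, d j * x j)
          - ((∑ i, |c i - ∑ j, A i j * 1|) - ∑ j, d j * 1) := by
  intro x hx
  haveI : NeZero m := ⟨hm.ne'⟩
  have hmne : (Finset.univ : Finset (Fin m)).Nonempty := Finset.univ_nonempty
  obtain ⟨i0, hi0⟩ : ∃ i, (∑ j, A i j) ≤ c i := by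
    by_contra h
    push_neg at h
    have h1 : ∑ i, c i < ∑ i, ∑ j, A i j :=
      Finset.sum_lt_sum_of_nonempty hmne (fun i _ => h i)
    linarith
  set s : Fin m → ℝ := fun i => ∑ j, A i j * (1 - x j) with hs
  have hs0 : ∀ i, 0 ≤ s i := fun i =>
    Finset.sum_nonneg fun j _ => mul_nonneg (hA i j).le (by linarith [(hx j).2])
  have hsr : ∀ i, s i = (∑ j, A i j) - ∑ j, A i j * x j := by
    intro i
    simp only [hs, mul_sub, mul_one, Finset.sum_sub_distrib]
  set f : Fin m → ℝ := fun i => |c i - ∑ j, A i j * x j| - |c i - ∑ j, A i j| + s i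
    with hf
  have hf0 : ∀ i, 0 ≤ f i := by
    intro i
    have htri := abs_sub_abs_le_abs_sub (c i - ∑ j, A i j) (c i - ∑ j, A i j * x j)
    have h2 : (c i - ∑ j, A i j) - (c i - ∑ j, A i j * x j) = -(s i) := by
      rw [hsr i]; ring
    rw [h2, abs_neg, abs_of_nonneg (hs0 i)] at htri
    simp only [hf]
    linarith
  have hsum : 2 * s i0 ≤ ∑ i, f i := by
    have hle := Finset.single_le_sum (f := f) (fun i _ => hf0 i) (Finset.mem_univ i0)
    have heq : f i0 = 2 * s i0 := by
      have h1 : 0 ≤ c i0 - ∑ j, A i0 j := by linarith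
      have h2 : 0 ≤ c i0 - ∑ j, A i0 j * x j := by
        have := hsr i0; have := hs0 i0; linarith
      simp only [hf]
      rw [abs_of_nonneg h2, abs_of_nonneg h1, hsr i0]; ring
    linarith
  have hlhs : (∑ j, (⨅ i, A i j) * (1 - x j)) ≤ s i0 := by
    apply Finset.sum_le_sum
    intro j _
    exact mul_le_mul_of_nonneg_right
      (ciInf_le (Set.Finite.bddBelow (Set.finite_range _)) i0)
      (by linarith [(hx j).2])
  have hss : ∑ i, s i = (∑ j, d j * 1) - ∑ j, d j * x j := by
    simp only [hs]
    rw [Finset.sum_comm]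
    simp only [mul_one]
    rw [← Finset.sum_sub_distrib]
    apply Finset.sum_congr rfl
    intro j _
    rw [hd j, ← Finset.sum_mul, mul_sub, mul_one]
  have hfsum : ∑ i, f i = ((∑ i, |c i - ∑ j, A i j * x j|) - ∑ j, d j * x j)
      - ((∑ i, |c i - ∑ j, A i j * 1|) - ∑ j, d j * 1) := by
    simp only [hf, mul_one]
    rw [Finset.sum_add_distrib, Finset.sum_sub_distrib, hss]
    ring
  rw [← hfsum]
  have := hs0 i0
  linarith
end
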